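/- Under the uplink model with h_J ≠ 0, the optimal unconstrained transform P̂ = I_B − E_J h_J h_Jᴴ C_y⁻¹ achieves the minimal mean squared error E[‖P̂ y − (H s + n)‖²] = E_J ‖h_J‖² ( 1 − E_J h_Jᴴ C_y⁻¹ h_J ); moreover E_J h_Jᴴ C_y⁻¹ h_J ≤ 1, so this minimal value is nonnegative. -/

import Mathlib

/-!
With `u = h_Jᴴ C_y⁻¹` and `α = u h_J`, the error `P̂ y - (H s + n)` is the scalar
`Z = s_J - E_J u y` times `h_J`, and `Z = -E_J (u H) s + (1 - E_J α) s_J - E_J u n` splits into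
three uncorrelated parts, so `E|Z|² = E_s E_J² ‖u H‖² + E_J |1 - E_J α|² + N_0 E_J² ‖u‖²`.
Since `u C_y = h_Jᴴ`, the quadratic form `u C_y uᴴ` equals `conj α`; expanding `C_y` gives
`E_s ‖u H‖² + E_J |α|² + N_0 ‖u‖² = conj α`. Hence `α` is real and nonnegative,
`α (1 - E_J α) ≥ 0` forces `E_J α ≤ 1`, and `E|Z|²` collapses to `E_J (1 - E_J α)`.
-/

open MeasureTheory ProbabilityTheory Matrix
open scoped ComplexOrder

noncomputable def vecNormSq {m : Type*} [Fintype m] (v : m → ℂ) : ℝ := ∑ i, ‖v i‖ ^ 2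

open ComplexConjugate

section VecNormSq

variable {m : Type*} [Fintype m]

lemma vecNormSq_nonneg (v : m → ℂ) : 0 ≤ vecNormSq v :=
  Finset.sum_nonneg fun _ _ => by positivity

lemma ofReal_vecNormSq (v : m → ℂ) : (vecNormSq v : ℂ) = v ⬝ᵥ star v := by
  simp [vecNormSq, dotProduct, Complex.mul_conj']

lemma vecNormSq_smul (c : ℂ) (v : m → ℂ) : vecNormSq (c • v) = ‖c‖ ^ 2 * vecNormSq v := by
  simp [vecNormSq, Finset.mul_sum, mul_pow]

end VecNormSq

lemma mul_le_one_of_eq_add_mul_sq {q a b Es EJ N0 : ℝ} (ha : 0 ≤ a) (hb : 0 ≤ b) (hEs : 0 ≤ Es)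
    (hEJ : 0 ≤ EJ) (hN0 : 0 ≤ N0) (hq : q = Es * a + EJ * q ^ 2 + N0 * b) : EJ * q ≤ 1 := by
  have hq0 : 0 ≤ q := by rw [hq]; positivity
  rcases hq0.eq_or_lt with h0 | hpos
  · simp [← h0]
  · nlinarith

section Covariance

variable {m k : Type*} [Fintype m] [Fintype k]

lemma posDef_covariance [DecidableEq m] (H : Matrix m k ℂ) (h : m → ℂ) {Es EJ N0 : ℝ}
    (hEs : 0 ≤ Es) (hEJ : 0 ≤ EJ) (hN0 : 0 < N0) :
    ((Es : ℂ) • (H * Hᴴ) + (EJ : ℂ) • vecMulVec h (star h) + (N0 : ℂ) • 1).PosDef :=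
  PosDef.posSemidef_add
    (((posSemidef_self_mul_conjTranspose H).smul (Complex.zero_le_real.mpr hEs)).add
      ((posSemidef_vecMulVec_self_star h).smul (Complex.zero_le_real.mpr hEJ)))
    (PosDef.one.smul (Complex.zero_lt_real.mpr hN0))

lemma dotProduct_mul_conjTranspose_mulVec_star (u : m → ℂ) (H : Matrix m k ℂ) :
    u ⬝ᵥ (H * Hᴴ) *ᵥ star u = vecNormSq (u ᵥ* H) := by
  rw [ofReal_vecNormSq, star_vecMul, dotProduct_mulVec, dotProduct_mulVec, vecMul_vecMul]

lemma dotProduct_vecMulVec_mulVec_star (u h : m → ℂ) :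
    u ⬝ᵥ vecMulVec h (star h) *ᵥ star u = ‖u ⬝ᵥ h‖ ^ 2 := by
  rw [← Complex.mul_conj', vecMulVec_mulVec, dotProduct_smul, star_dotProduct_star]
  simp

lemma ofReal_quadForm_eq_star_dotProduct [DecidableEq m] {C : Matrix m m ℂ} {H : Matrix m k ℂ}
    {h u : m → ℂ} {Es EJ N0 : ℝ}
    (hC : C = (Es : ℂ) • (H * Hᴴ) + (EJ : ℂ) • vecMulVec h (star h) + (N0 : ℂ) • 1)
    (hu : u ᵥ* C = star h) :
    ((Es * vecNormSq (u ᵥ* H) + EJ * ‖u ⬝ᵥ h‖ ^ 2 + N0 * vecNormSq u : ℝ) : ℂ)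
      = star (u ⬝ᵥ h) := by
  calc _ = u ⬝ᵥ C *ᵥ star u := by
          simp only [hC, add_mulVec, smul_mulVec, one_mulVec, dotProduct_add, dotProduct_smul,
            dotProduct_mul_conjTranspose_mulVec_star, dotProduct_vecMulVec_mulVec_star,
            ← ofReal_vecNormSq]
          push_cast; simp [smul_eq_mul]
    _ = star (u ⬝ᵥ h) := by rw [dotProduct_mulVec, hu, star_dotProduct_star]

lemma mulVec_sub_eq_smul [DecidableEq m] {P : Matrix m m ℂ} {H : Matrix m k ℂ} {h u n y : m → ℂ}
    {s : k → ℂ} {sJ c : ℂ}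
    (hP : P = 1 - c • vecMulVec h u) (hy : y = H *ᵥ s + sJ • h + n) :
    P *ᵥ y - (H *ᵥ s + n)
      = ((-c • (u ᵥ* H)) ⬝ᵥ s + (1 - c * (u ⬝ᵥ h)) * sJ + (-c • u) ⬝ᵥ n) • h := by
  subst hP hy
  simp only [sub_mulVec, one_mulVec, smul_mulVec, vecMulVec_mulVec, op_smul_eq_smul,
    dotProduct_add, dotProduct_smul, ← dotProduct_mulVec, smul_dotProduct, smul_eq_mul]
  module

end Covariance

section SecondMoments

variable {Ω : Type*} [MeasurableSpace Ω] {μ : Measure Ω} {ι : Type*} [Fintype ι]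

lemma integral_mul_conj_self (X : Ω → ℂ) :
    ∫ ω, X ω * conj (X ω) ∂μ = ((∫ ω, ‖X ω‖ ^ 2 ∂μ : ℝ) : ℂ) := by
  simp_rw [Complex.mul_conj', ← Complex.ofReal_pow]
  exact integral_ofReal

lemma ProbabilityTheory.IndepFun.integral_mul_conj {X Y : Ω → ℂ} (hXY : IndepFun X Y μ)
    (hX : AEStronglyMeasurable X μ) (hY : AEStronglyMeasurable Y μ) :
    ∫ ω, X ω * conj (Y ω) ∂μ = (∫ ω, X ω ∂μ) * conj (∫ ω, Y ω ∂μ) := by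
  rw [← integral_conj (f := Y)]
  exact (hXY.comp measurable_id Complex.continuous_conj.measurable
    ).integral_fun_mul_eq_mul_integral hX hY.star

lemma integral_norm_sum_sq_of_orthogonal {X : ι → Ω → ℂ}
    (hX : ∀ i, MemLp (X i) 2 μ)
    (horth : Pairwise fun i j => ∫ ω, X i ω * conj (X j ω) ∂μ = 0) :
    ∫ ω, ‖∑ i, X i ω‖ ^ 2 ∂μ = ∑ i, ∫ ω, ‖X i ω‖ ^ 2 ∂μ := by
  have hint : ∀ i j, Integrable (fun ω => X i ω * conj (X j ω)) μ := fun i j =>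
    (hX i).integrable_mul (hX j).star
  suffices h : ((∫ ω, ‖∑ i, X i ω‖ ^ 2 ∂μ : ℝ) : ℂ)
      = ∑ i, ((∫ ω, ‖X i ω‖ ^ 2 ∂μ : ℝ) : ℂ) by
    exact_mod_cast h
  simp_rw [← integral_mul_conj_self, map_sum, Finset.sum_mul_sum]
  rw [integral_finsetSum _ fun i _ => integrable_finsetSum _ fun j _ => hint i j]
  refine Finset.sum_congr rfl fun i _ => ?_
  rw [integral_finsetSum _ fun j _ => hint i j, Finset.sum_eq_single i]
  · exact fun j _ hji => horth hji.symm
  · simp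

lemma MeasureTheory.MemLp.dotProduct {p : ENNReal} {X : Ω → ι → ℂ} (hX : MemLp X p μ)
    (a : ι → ℂ) :
    MemLp (fun ω => a ⬝ᵥ X ω) p μ :=
  memLp_finsetSum _ fun i _ => (hX.eval i).const_mul (a i)

lemma integral_dotProduct_eq_zero {X : Ω → ι → ℂ} (hX : Integrable X μ)
    (h0 : ∀ i, ∫ ω, X ω i ∂μ = 0) (a : ι → ℂ) : ∫ ω, a ⬝ᵥ X ω ∂μ = 0 := by
  simp only [dotProduct]
  rw [integral_finsetSum _ fun i _ => (hX.eval i).const_mul (a i)]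
  simp [integral_const_mul, h0]

lemma integral_norm_dotProduct_sq [DecidableEq ι] {X : Ω → ι → ℂ} (hX : MemLp X 2 μ) {σ : ℝ}
    (hcov : ∀ i j, ∫ ω, X ω i * conj (X ω j) ∂μ = if i = j then (σ : ℂ) else 0) (a : ι → ℂ) :
    ∫ ω, ‖a ⬝ᵥ X ω‖ ^ 2 ∂μ = σ * vecNormSq a := by
  have hterm : ∀ i j, ∫ ω, a i * X ω i * conj (a j * X ω j) ∂μ
      = a i * conj (a j) * ∫ ω, X ω i * conj (X ω j) ∂μ := fun i j => by
    rw [← integral_const_mul]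
    congr with ω
    simp only [map_mul]
    ring
  have hvar : ∀ i, ∫ ω, ‖X ω i‖ ^ 2 ∂μ = σ := fun i => by
    have h := (integral_mul_conj_self (fun ω => X ω i)).symm.trans (hcov i i)
    exact_mod_cast h.trans (if_pos rfl)
  simp only [dotProduct]
  rw [integral_norm_sum_sq_of_orthogonal (fun i => (hX.eval i).const_mul (a i))
    fun i j hij => (hterm i j).trans (by rw [hcov, if_neg hij, mul_zero])]
  simp_rw [norm_mul, mul_pow, integral_const_mul, hvar]
  simp [vecNormSq, Finset.mul_sum, mul_comm]

lemma integral_norm_add_add_sq_of_indepFun {X Y W : Ω → ℂ}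
    (hX : MemLp X 2 μ) (hY : MemLp Y 2 μ) (hW : MemLp W 2 μ)
    (hX0 : ∫ ω, X ω ∂μ = 0) (hY0 : ∫ ω, Y ω ∂μ = 0)
    (hXY : IndepFun X Y μ) (hXW : IndepFun X W μ) (hYW : IndepFun Y W μ) :
    ∫ ω, ‖X ω + Y ω + W ω‖ ^ 2 ∂μ
      = ∫ ω, ‖X ω‖ ^ 2 ∂μ + ∫ ω, ‖Y ω‖ ^ 2 ∂μ + ∫ ω, ‖W ω‖ ^ 2 ∂μ := by
  have h := integral_norm_sum_sq_of_orthogonal (μ := μ) (X := ![X, Y, W])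
    (fun i => by fin_cases i <;> assumption) fun i j hij => by
      fin_cases i <;> fin_cases j <;> simp only [ne_eq, not_true_eq_false] at hij <;>
        simp [IndepFun.integral_mul_conj, hXY, hXW, hYW, hXY.symm, hXW.symm, hYW.symm,
          hX.1, hY.1, hW.1, hX0, hY0]
  simpa [Fin.sum_univ_three, add_assoc] using h

end SecondMoments

section Model

variable {Ω : Type*} [MeasurableSpace Ω] {μ : Measure Ω} {ι κ : Type*} [Fintype ι] [Fintype κ]
  [DecidableEq ι] [DecidableEq κ]

lemma integral_norm_dotProduct_add_mul_add_dotProduct_sq [IsFiniteMeasure μ]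
    {s : Ω → ι → ℂ} {sJ : Ω → ℂ} {n : Ω → κ → ℂ} {Es EJ N0 : ℝ}
    (hindep : iIndep
      ![MeasurableSpace.comap s inferInstance,
        MeasurableSpace.comap sJ inferInstance,
        MeasurableSpace.comap n inferInstance] μ)
    (hs2 : MemLp s 2 μ) (hsJ2 : MemLp sJ 2 μ) (hn2 : MemLp n 2 μ)
    (hsmean : ∀ i, ∫ ω, s ω i ∂μ = 0) (hsJmean : ∫ ω, sJ ω ∂μ = 0)
    (hscov : ∀ i j, ∫ ω, s ω i * conj (s ω j) ∂μ = if i = j then (Es : ℂ) else 0)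
    (hsJvar : ∫ ω, ‖sJ ω‖ ^ 2 ∂μ = EJ)
    (hncov : ∀ i j, ∫ ω, n ω i * conj (n ω j) ∂μ = if i = j then (N0 : ℂ) else 0)
    (a : ι → ℂ) (c : ℂ) (b : κ → ℂ) :
    ∫ ω, ‖a ⬝ᵥ s ω + c * sJ ω + b ⬝ᵥ n ω‖ ^ 2 ∂μ
      = Es * vecNormSq a + EJ * ‖c‖ ^ 2 + N0 * vecNormSq b := by
  have hsa : Measurable fun x : ι → ℂ => a ⬝ᵥ x := by fun_prop
  have hnb : Measurable fun x : κ → ℂ => b ⬝ᵥ x := by fun_prop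
  have h01 : IndepFun s sJ μ := hindep.indep (i := 0) (j := 1) (by decide)
  have h02 : IndepFun s n μ := hindep.indep (i := 0) (j := 2) (by decide)
  have h12 : IndepFun sJ n μ := hindep.indep (i := 1) (j := 2) (by decide)
  rw [integral_norm_add_add_sq_of_indepFun (hs2.dotProduct a) (hsJ2.const_mul c)
      (hn2.dotProduct b) (integral_dotProduct_eq_zero (hs2.integrable one_le_two) hsmean a)
      (by rw [integral_const_mul, hsJmean, mul_zero])
      (h01.comp hsa (measurable_const_mul c)) (h02.comp hsa hnb)
      (h12.comp (measurable_const_mul c) hnb),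
    integral_norm_dotProduct_sq hs2 hscov, integral_norm_dotProduct_sq hn2 hncov]
  simp_rw [norm_mul, mul_pow, integral_const_mul, hsJvar]
  ring

end Model

theorem stmt12_general
    {Ω : Type*} [MeasurableSpace Ω] (μ : Measure Ω) [IsProbabilityMeasure μ]
    (B U : ℕ)
    (H : Matrix (Fin B) (Fin U) ℂ) (hJ : Fin B → ℂ)
    (Es EJ N0 : ℝ) (hEs : 0 < Es) (hEJ : 0 < EJ) (hN0 : 0 < N0)
    (s : Ω → Fin U → ℂ) (sJ : Ω → ℂ) (n : Ω → Fin B → ℂ)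
    (hindep : iIndep
      ![MeasurableSpace.comap s inferInstance,
        MeasurableSpace.comap sJ inferInstance,
        MeasurableSpace.comap n inferInstance] μ)
    (hs2 : MemLp s 2 μ) (hsJ2 : MemLp sJ 2 μ) (hn2 : MemLp n 2 μ)
    (hsmean : ∀ i, ∫ ω, s ω i ∂μ = 0) (hsJmean : ∫ ω, sJ ω ∂μ = 0)
    (hscov : ∀ i j, ∫ ω, s ω i * (starRingEnd ℂ) (s ω j) ∂μ = if i = j then (Es : ℂ) else 0)
    (hsJvar : ∫ ω, ‖sJ ω‖ ^ 2 ∂μ = EJ)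
    (hncov : ∀ i j, ∫ ω, n ω i * (starRingEnd ℂ) (n ω j) ∂μ = if i = j then (N0 : ℂ) else 0)
    (y : Ω → Fin B → ℂ) (hy : ∀ ω, y ω = H *ᵥ s ω + sJ ω • hJ + n ω)
    (Cy : Matrix (Fin B) (Fin B) ℂ)
    (hCy : Cy = (Es : ℂ) • (H * Hᴴ) + (EJ : ℂ) • vecMulVec hJ (star hJ)
      + (N0 : ℂ) • (1 : Matrix (Fin B) (Fin B) ℂ))
    (Phat : Matrix (Fin B) (Fin B) ℂ)
    (hPhat : Phat = 1 - (EJ : ℂ) • (vecMulVec hJ (star hJ) * Cy⁻¹)) :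
    ∫ ω, vecNormSq (Phat *ᵥ y ω - (H *ᵥ s ω + n ω)) ∂μ
      = EJ * vecNormSq hJ * (1 - EJ * (star hJ ⬝ᵥ Cy⁻¹ *ᵥ hJ).re) ∧
    EJ * (star hJ ⬝ᵥ Cy⁻¹ *ᵥ hJ).re ≤ 1 ∧
    0 ≤ EJ * vecNormSq hJ * (1 - EJ * (star hJ ⬝ᵥ Cy⁻¹ *ᵥ hJ).re) := by
  have hPD : Cy.PosDef := hCy ▸ posDef_covariance H hJ hEs.le hEJ.le hN0
  set u := star hJ ᵥ* Cy⁻¹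
  have hu : u ᵥ* Cy = star hJ := by
    rw [vecMul_vecMul, nonsing_inv_mul _ ((isUnit_iff_isUnit_det Cy).mp hPD.isUnit), vecMul_one]
  set q := Es * vecNormSq (u ᵥ* H) + EJ * ‖u ⬝ᵥ hJ‖ ^ 2 + N0 * vecNormSq u with hq
  have hα : u ⬝ᵥ hJ = q := by
    rw [← star_star (u ⬝ᵥ hJ), ← ofReal_quadForm_eq_star_dotProduct hCy hu]
    exact Complex.conj_ofReal q
  rw [hα, Complex.norm_real, Real.norm_eq_abs, sq_abs] at hq
  have hEJq : EJ * q ≤ 1 := mul_le_one_of_eq_add_mul_sq (vecNormSq_nonneg _) (vecNormSq_nonneg _)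
    hEs.le hEJ.le hN0.le hq
  have hαq : (star hJ ⬝ᵥ Cy⁻¹ *ᵥ hJ).re = q := by rw [dotProduct_mulVec, hα, Complex.ofReal_re]
  have hPu : Phat = 1 - (EJ : ℂ) • vecMulVec hJ u := by rw [hPhat, vecMulVec_mul]
  have herr := fun ω => mulVec_sub_eq_smul hPu (hy ω)
  have hmse := integral_norm_dotProduct_add_mul_add_dotProduct_sq hindep hs2 hsJ2 hn2 hsmean
    hsJmean hscov hsJvar hncov (-(EJ : ℂ) • (u ᵥ* H)) (1 - EJ * (u ⬝ᵥ hJ)) (-(EJ : ℂ) • u)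
  simp_rw [herr, vecNormSq_smul, integral_mul_const, hmse, vecNormSq_smul, hα, hαq]
  have hnorm : ‖(1 : ℂ) - EJ * q‖ ^ 2 = (1 - EJ * q) ^ 2 := by
    rw [← Complex.ofReal_one, ← Complex.ofReal_mul, ← Complex.ofReal_sub, Complex.norm_real,
      Real.norm_eq_abs, sq_abs]
  simp only [norm_neg, Complex.norm_real, Real.norm_eq_abs, sq_abs, hnorm]
  have hK := vecNormSq_nonneg hJ
  refine ⟨by linear_combination -(vecNormSq hJ * EJ ^ 2) * hq, hEJq, ?_⟩
  have := sub_nonneg.mpr hEJq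
  positivity

/-- the optimal unconstrained transform `P̂ = I − E_J h_J h_Jᴴ C_y⁻¹` achieves
the minimal MSE `E_J ‖h_J‖² (1 − E_J h_Jᴴ C_y⁻¹ h_J)`; moreover `E_J h_Jᴴ C_y⁻¹ h_J ≤ 1`,
so this minimal value is nonnegative. -/
theorem stmt12
    {Ω : Type*} [MeasurableSpace Ω] (μ : Measure Ω) [IsProbabilityMeasure μ]
    (B U : ℕ) (hB : 0 < B) (hU : 0 < U)
    (H : Matrix (Fin B) (Fin U) ℂ) (hJ : Fin B → ℂ)
    (Es EJ N0 : ℝ) (hEs : 0 < Es) (hEJ : 0 < EJ) (hN0 : 0 < N0)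
    (s : Ω → Fin U → ℂ) (sJ : Ω → ℂ) (n : Ω → Fin B → ℂ)
    (hindep : iIndep
      ![MeasurableSpace.comap s inferInstance,
        MeasurableSpace.comap sJ inferInstance,
        MeasurableSpace.comap n inferInstance] μ)
    (hs2 : MemLp s 2 μ) (hsJ2 : MemLp sJ 2 μ) (hn2 : MemLp n 2 μ)
    (hsmean : ∀ i, ∫ ω, s ω i ∂μ = 0) (hsJmean : ∫ ω, sJ ω ∂μ = 0)
    (hnmean : ∀ i, ∫ ω, n ω i ∂μ = 0)
    (hscov : ∀ i j, ∫ ω, s ω i * (starRingEnd ℂ) (s ω j) ∂μ = if i = j then (Es : ℂ) else 0)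
    (hsJvar : ∫ ω, ‖sJ ω‖ ^ 2 ∂μ = EJ)
    (hncov : ∀ i j, ∫ ω, n ω i * (starRingEnd ℂ) (n ω j) ∂μ = if i = j then (N0 : ℂ) else 0)
    (y : Ω → Fin B → ℂ) (hy : ∀ ω, y ω = H *ᵥ s ω + sJ ω • hJ + n ω)
    (Cy : Matrix (Fin B) (Fin B) ℂ)
    (hCy : Cy = (Es : ℂ) • (H * Hᴴ) + (EJ : ℂ) • vecMulVec hJ (star hJ)
      + (N0 : ℂ) • (1 : Matrix (Fin B) (Fin B) ℂ))
    (hhJ : hJ ≠ 0)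
    (Phat : Matrix (Fin B) (Fin B) ℂ)
    (hPhat : Phat = 1 - (EJ : ℂ) • (vecMulVec hJ (star hJ) * Cy⁻¹)) :
    ∫ ω, vecNormSq (Phat *ᵥ y ω - (H *ᵥ s ω + n ω)) ∂μ
      = EJ * vecNormSq hJ * (1 - EJ * (star hJ ⬝ᵥ Cy⁻¹ *ᵥ hJ).re) ∧
    EJ * (star hJ ⬝ᵥ Cy⁻¹ *ᵥ hJ).re ≤ 1 ∧
    0 ≤ EJ * vecNormSq hJ * (1 - EJ * (star hJ ⬝ᵥ Cy⁻¹ *ᵥ hJ).re) :=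
  stmt12_general μ B U H hJ Es EJ N0 hEs hEJ hN0 s sJ n hindep hs2 hsJ2 hn2 hsmean hsJmean hscov
    hsJvar hncov y hy Cy hCy Phat hPhat
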